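/- arXiv:1610.04122 — 5 statements merged into one kernel-verified Lean document; each statement's English description precedes it below -/
import Mathlib

section
/- The number of order-preserving, order-decreasing injective partial maps from {1,...,n} to itself equals the Catalan number c_{n+1}, where c_0 = c_1 = 1 and c_n = sum_{i=0}^{n-1} c_i c_{n-1-i}. -/
open Finset

/-- `f : Fin n → Option (Fin n)` represents an injective partial map of `{1,…,n}`
(elements 0-indexed): `f a = some x` means `a ∈ D(f)` with image `x`. Injectivity: -/
def IsPartialInj {n : ℕ} (f : Fin n → Option (Fin n)) : Prop :=
  ∀ a b x, f a = some x → f b = some x → a = b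

/-- order preserving: `a < b` in the domain implies `f a < f b`. -/
def IsOrderPres {n : ℕ} (f : Fin n → Option (Fin n)) : Prop :=
  ∀ a b x y, a < b → f a = some x → f b = some y → x < y

/-- order decreasing: `f a ≤ a` on the domain. -/
def IsOrderDec {n : ℕ} (f : Fin n → Option (Fin n)) : Prop :=
  ∀ a x, f a = some x → x ≤ a

/-- The planar upper triangular rook monoid `B_n`: order-preserving,
order-decreasing injective partial maps of `{1,…,n}`. -/
def Bn (n : ℕ) : Set (Fin n → Option (Fin n)) :=
  {f | IsPartialInj f ∧ IsOrderPres f ∧ IsOrderDec f}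

/-!
An element of `B_n` is determined by its domain `s` and range `t`: it must send the `k`-th
element of `s` to the `k`-th element of `t`. Such a map exists and is order decreasing exactly
when `#s = #t` and `t` has at least as many elements as `s` below every threshold (a ballot
condition). Reading `j = 0, …, n` in turn and writing `D` if `j - 1 ∈ s`, then `U` if `j ∈ t`
(and the opposite steps otherwise) turns such pairs bijectively into Dyck words of semilength
`n + 1`, the ballot condition being the non-negativity of the path; these are counted by
`catalan (n + 1)`.
-/

open DyckStep

section BallotPair

variable {α : Type*} [LinearOrder α] {s t : Finset α}

def IsBallotPair (s t : Finset α) : Prop :=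
  #s = #t ∧ ∀ b, #{x ∈ s | x < b} ≤ #{x ∈ t | x < b}

lemma card_filter_lt_orderEmbOfFin {k : ℕ} (h : #s = k) (i : Fin k) :
    #{x ∈ s | x < s.orderEmbOfFin h i} = i := by
  have : {x ∈ s | x < s.orderEmbOfFin h i} = (Iio i).map (s.orderEmbOfFin h).toEmbedding := by
    ext x
    simp only [mem_filter, mem_map, mem_Iio]
    constructor
    · rintro ⟨hx, hlt⟩
      obtain ⟨j, rfl⟩ : x ∈ Set.range (s.orderEmbOfFin h) := by simpa using hx
      exact ⟨j, by simpa using hlt, rfl⟩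
    · rintro ⟨j, hj, rfl⟩
      exact ⟨s.orderEmbOfFin_mem h j, by simpa using hj⟩
  rw [this, card_map, Fin.card_Iio]

lemma IsBallotPair.orderEmbOfFin_le (hst : IsBallotPair s t) (i : Fin #s) :
    t.orderEmbOfFin hst.1.symm i ≤ s.orderEmbOfFin rfl i := by
  -- If `s_i < t_i`, then the `i + 1` elements `s_0, …, s_i` lie below `t_i`, but only `i`
  -- elements of `t` do.
  by_contra! hlt
  set b := t.orderEmbOfFin hst.1.symm i
  have hs : insert (s.orderEmbOfFin rfl i) {x ∈ s | x < s.orderEmbOfFin rfl i} ⊆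
      {x ∈ s | x < b} := by
    intro x hx
    simp only [mem_insert, mem_filter] at hx ⊢
    rcases hx with rfl | ⟨hx, hlt'⟩
    · exact ⟨s.orderEmbOfFin_mem rfl i, hlt⟩
    · exact ⟨hx, hlt'.trans hlt⟩
  have hs_card := card_le_card hs
  rw [card_insert_of_notMem (by simp), card_filter_lt_orderEmbOfFin] at hs_card
  have ht_card := hst.2 b
  rw [card_filter_lt_orderEmbOfFin] at ht_card
  omega

end BallotPair

section PairWord

variable (d r : ℕ → Prop) [DecidablePred d] [DecidablePred r]

def pairWord (m : ℕ) : List DyckStep :=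
  (List.range m).flatMap fun j => [if d j then D else U, if r j then U else D]

/-- After `2 t` steps the path `pairWord d r m` has height `2 (count r t - count d t)`, and one
step later one less or one more as `d t` holds or not: the equation says that the path ends at
height `0`, the inequalities that it never goes below `0`. -/
def IsBallotSeq (m : ℕ) : Prop :=
  Nat.count d m = Nat.count r m ∧ ∀ t < m, Nat.count d (t + 1) ≤ Nat.count r t

variable {d r} {m t : ℕ}

lemma pairWord_succ (m : ℕ) :
    pairWord d r (m + 1) = pairWord d r m ++ [if d m then D else U, if r m then U else D] := by
  simp [pairWord, List.range_succ]

lemma length_pairWord (m : ℕ) : (pairWord d r m).length = 2 * m := by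
  induction m with
  | zero => rfl
  | succ m ih => simp [pairWord_succ, ih]; ring

lemma count_U_pairWord (m : ℕ) :
    (pairWord d r m).count U + Nat.count d m = m + Nat.count r m := by
  induction m with
  | zero => rfl
  | succ m ih =>
    simp only [pairWord_succ, List.count_append, Nat.count_succ]
    by_cases hd : d m <;> by_cases hr : r m <;> simp [hd, hr] <;> omega

lemma count_D_pairWord (m : ℕ) :
    (pairWord d r m).count D + Nat.count r m = m + Nat.count d m := by
  induction m with
  | zero => rfl
  | succ m ih =>
    simp only [pairWord_succ, List.count_append, Nat.count_succ]
    by_cases hd : d m <;> by_cases hr : r m <;> simp [hd, hr] <;> omega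

lemma take_pairWord_two_mul (h : t ≤ m) : (pairWord d r m).take (2 * t) = pairWord d r t := by
  induction m with
  | zero =>
    obtain rfl : t = 0 := by omega
    rfl
  | succ m ih =>
    rcases h.lt_or_eq with h | rfl
    · rw [pairWord_succ, List.take_append_of_le_length (by simp [length_pairWord]; omega),
        ih (by omega)]
    · exact List.take_of_length_le (length_pairWord _).le

lemma take_pairWord_two_mul_add_one (h : t < m) :
    (pairWord d r m).take (2 * t + 1) = pairWord d r t ++ [if d t then D else U] := by
  have h2 : (pairWord d r m).take (2 * (t + 1)) = pairWord d r (t + 1) :=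
    take_pairWord_two_mul h
  rw [show 2 * t + 1 = min (2 * t + 1) (2 * (t + 1)) by omega, ← List.take_take, h2,
    pairWord_succ, List.take_append]
  simp [length_pairWord]

lemma getElem?_pairWord_two_mul (h : t < m) :
    (pairWord d r m)[2 * t]? = some (if d t then D else U) := by
  rw [← List.getElem?_take_of_lt (Nat.lt_succ_self _), take_pairWord_two_mul_add_one h,
    List.getElem?_append_right (by simp [length_pairWord])]
  simp [length_pairWord]

lemma getElem?_pairWord_two_mul_add_one (h : t < m) :
    (pairWord d r m)[2 * t + 1]? = some (if r t then U else D) := by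
  rw [← List.getElem?_take_of_lt (show 2 * t + 1 < 2 * (t + 1) by omega),
    take_pairWord_two_mul h, pairWord_succ, List.getElem?_append_right (by simp [length_pairWord])]
  simp [length_pairWord]

lemma pairWord_congr {d' r' : ℕ → Prop} [DecidablePred d'] [DecidablePred r']
    (hd : ∀ j < m, d j ↔ d' j) (hr : ∀ j < m, r j ↔ r' j) :
    pairWord d r m = pairWord d' r' m :=
  List.flatMap_congr fun j hj => by
    rw [List.mem_range] at hj
    simp only [hd j hj, hr j hj]

lemma isBallotSeq_iff :
    IsBallotSeq d r m ↔ (pairWord d r m).count U = (pairWord d r m).count D ∧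
      ∀ i, ((pairWord d r m).take i).count D ≤ ((pairWord d r m).take i).count U := by
  have hU := count_U_pairWord (d := d) (r := r) m
  have hD := count_D_pairWord (d := d) (r := r) m
  have odd_prefix {t : ℕ} (ht : t < m) :
      ((pairWord d r m).take (2 * t + 1)).count D ≤ ((pairWord d r m).take (2 * t + 1)).count U
        ↔ Nat.count d (t + 1) ≤ Nat.count r t := by
    rw [take_pairWord_two_mul_add_one ht, List.count_append, List.count_append, Nat.count_succ]
    have := count_U_pairWord (d := d) (r := r) t
    have := count_D_pairWord (d := d) (r := r) t
    by_cases hdt : d t <;> simp [hdt] <;> omega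
  constructor
  · rintro ⟨hbal, hle⟩
    refine ⟨by omega, fun i => ?_⟩
    by_cases hi : 2 * m ≤ i
    · rw [List.take_of_length_le (by rw [length_pairWord]; exact hi)]
      omega
    obtain ⟨t, rfl | rfl⟩ := Nat.even_or_odd' i
    · rw [take_pairWord_two_mul (by omega)]
      have := count_U_pairWord (d := d) (r := r) t
      have := count_D_pairWord (d := d) (r := r) t
      have := Nat.count_monotone d (Nat.le_add_right t 1)
      have := hle t (by omega)
      omega
    · exact (odd_prefix (by omega)).2 (hle t (by omega))
  · rintro ⟨hbal, hle⟩
    exact ⟨by omega, fun t ht => (odd_prefix ht).1 (hle _)⟩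

lemma IsBallotSeq.of_toList_eq {p : DyckWord} (h : p.toList = pairWord d r m) :
    IsBallotSeq d r m :=
  isBallotSeq_iff.2 ⟨h ▸ p.count_U_eq_count_D, h ▸ p.count_D_le_count_U⟩

lemma IsBallotSeq.not_zero (h : IsBallotSeq d r m) (hm : 0 < m) : ¬ d 0 := by
  have := h.2 0 hm
  simp_all [Nat.count_succ]

lemma IsBallotSeq.not_last (h : IsBallotSeq d r (m + 1)) : ¬ r m := by
  intro hr
  have := h.2 m m.lt_succ_self
  have := h.1
  simp_all [Nat.count_succ]

lemma eq_pairWord {l : List DyckStep} (hl : l.length = 2 * m) :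
    l = pairWord (fun j => l[2 * j]? = some D) (fun j => l[2 * j + 1]? = some U) m := by
  refine List.ext_getElem? fun k => ?_
  obtain ⟨j, rfl | rfl⟩ := Nat.even_or_odd' k
  · by_cases hj : j < m
    · rw [getElem?_pairWord_two_mul hj, List.getElem?_eq_getElem (by omega)]
      rcases (l[2 * j]'(by omega)).dichotomy with h | h <;> simp [h]
    · rw [List.getElem?_eq_none (by omega),
        List.getElem?_eq_none (by simp [length_pairWord]; omega)]
  · by_cases hj : j < m
    · rw [getElem?_pairWord_two_mul_add_one hj, List.getElem?_eq_getElem (by omega)]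
      rcases (l[2 * j + 1]'(by omega)).dichotomy with h | h <;> simp [h]
    · rw [List.getElem?_eq_none (by omega),
        List.getElem?_eq_none (by simp [length_pairWord]; omega)]

def DyckWord.ofIsBallotSeq (h : IsBallotSeq d r m) : DyckWord where
  toList := pairWord d r m
  count_U_eq_count_D := (isBallotSeq_iff.1 h).1
  count_D_le_count_U := (isBallotSeq_iff.1 h).2

lemma DyckWord.semilength_ofIsBallotSeq (h : IsBallotSeq d r m) :
    (DyckWord.ofIsBallotSeq h).semilength = m := by
  have := (DyckWord.ofIsBallotSeq h).two_mul_semilength_eq_length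
  change _ = (pairWord d r m).length at this
  rw [length_pairWord] at this
  omega

end PairWord

lemma Nat.count_mem_image {α : Type*} {f : α → ℕ} (hf : Function.Injective f) (s : Finset α)
    (u : ℕ) : Nat.count (· ∈ s.image f) u = #{i ∈ s | f i < u} := by
  rw [Nat.count_eq_card_filter_range, ← Finset.card_image_of_injective _ hf]
  congr 1
  ext j
  simp only [mem_filter, mem_range, mem_image]
  constructor
  · rintro ⟨hj, i, hi, rfl⟩
    exact ⟨i, ⟨hi, hj⟩, rfl⟩
  · rintro ⟨i, ⟨hi, hj⟩, rfl⟩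
    exact ⟨hj, i, hi, rfl⟩

namespace Bn

variable {n : ℕ} {s t : Finset (Fin n)}

def dom (f : Fin n → Option (Fin n)) : Finset (Fin n) := {i | (f i).isSome}

def ran (f : Fin n → Option (Fin n)) : Finset (Fin n) := {x | ∃ i, f i = some x}

lemma injOn_getD_dom {f : Fin n → Option (Fin n)} (hf : IsPartialInj f) :
    Set.InjOn (fun i => (f i).getD i) (dom f) := by
  intro a ha b hb hab
  simp only [dom, coe_filter, mem_univ, true_and, Set.mem_ofPred_eq,
    Option.isSome_iff_exists] at ha hb
  obtain ⟨x, hx⟩ := ha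
  obtain ⟨y, hy⟩ := hb
  simp only [hx, hy, Option.getD_some] at hab
  exact hf a b x hx (hab ▸ hy)

lemma image_getD_dom (f : Fin n → Option (Fin n)) :
    (dom f).image (fun i => (f i).getD i) = ran f := by
  ext x
  simp only [dom, ran, mem_image, mem_filter, mem_univ, true_and, Option.isSome_iff_exists]
  constructor
  · rintro ⟨i, ⟨y, hy⟩, rfl⟩
    exact ⟨i, by simp [hy]⟩
  · rintro ⟨i, hi⟩
    exact ⟨i, ⟨x, hi⟩, by simp [hi]⟩

lemma isBallotPair_dom_ran {f : Fin n → Option (Fin n)} (hf : f ∈ Bn n) :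
    IsBallotPair (dom f) (ran f) := by
  obtain ⟨hinj, -, hdec⟩ := hf
  refine ⟨by rw [← image_getD_dom, card_image_of_injOn (injOn_getD_dom hinj)], fun b => ?_⟩
  refine card_le_card_of_injOn _ (fun i hi => ?_) ((injOn_getD_dom hinj).mono (filter_subset _ _))
  simp only [coe_filter, Set.mem_ofPred_eq] at hi ⊢
  refine ⟨image_getD_dom f ▸ mem_image_of_mem _ hi.1, ?_⟩
  obtain ⟨x, hx⟩ := Option.isSome_iff_exists.1 (by simpa [dom] using hi.1)
  simpa [hx] using (hdec i x hx).trans_lt hi.2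

def ofDomRan (s t : Finset (Fin n)) (h : #t = #s) : Fin n → Option (Fin n) :=
  fun i => if hi : i ∈ s then some (t.orderEmbOfFin h ((s.orderIsoOfFin rfl).symm ⟨i, hi⟩))
    else none

section ofDomRan

variable {h : #t = #s}

lemma ofDomRan_orderEmbOfFin (k : Fin #s) :
    ofDomRan s t h (s.orderEmbOfFin rfl k) = some (t.orderEmbOfFin h k) := by
  have : (⟨s.orderEmbOfFin rfl k, s.orderEmbOfFin_mem rfl k⟩ : s) = s.orderIsoOfFin rfl k :=
    Subtype.ext (s.coe_orderIsoOfFin_apply rfl k).symm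
  rw [ofDomRan, dif_pos (s.orderEmbOfFin_mem rfl k), this, OrderIso.symm_apply_apply]

lemma ofDomRan_eq_some_iff {i x : Fin n} : ofDomRan s t h i = some x ↔
    ∃ k, s.orderEmbOfFin rfl k = i ∧ t.orderEmbOfFin h k = x := by
  constructor
  · intro hi
    have hmem : i ∈ s := by
      by_contra hns
      simp [ofDomRan, hns] at hi
    obtain ⟨k, rfl⟩ : i ∈ Set.range (s.orderEmbOfFin rfl) := by simpa using hmem
    rw [ofDomRan_orderEmbOfFin, Option.some_inj] at hi
    exact ⟨k, rfl, hi⟩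
  · rintro ⟨k, rfl, rfl⟩
    exact ofDomRan_orderEmbOfFin k

lemma isPartialInj_ofDomRan : IsPartialInj (ofDomRan s t h) := by
  intro a b x ha hb
  obtain ⟨k, rfl, rfl⟩ := ofDomRan_eq_some_iff.1 ha
  obtain ⟨l, rfl, hl⟩ := ofDomRan_eq_some_iff.1 hb
  rw [(t.orderEmbOfFin h).injective hl]

lemma isOrderPres_ofDomRan : IsOrderPres (ofDomRan s t h) := by
  intro a b x y hab ha hb
  obtain ⟨k, rfl, rfl⟩ := ofDomRan_eq_some_iff.1 ha
  obtain ⟨l, rfl, rfl⟩ := ofDomRan_eq_some_iff.1 hb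
  simpa using hab

lemma isOrderDec_ofDomRan (hst : IsBallotPair s t) : IsOrderDec (ofDomRan s t h) := by
  intro a x hx
  obtain ⟨k, rfl, rfl⟩ := ofDomRan_eq_some_iff.1 hx
  exact hst.orderEmbOfFin_le k

lemma dom_ofDomRan : dom (ofDomRan s t h) = s := by
  ext i
  simp only [dom, mem_filter, mem_univ, true_and, Option.isSome_iff_exists, ofDomRan_eq_some_iff]
  constructor
  · rintro ⟨x, k, rfl, -⟩
    exact s.orderEmbOfFin_mem rfl k
  · intro hi
    obtain ⟨k, rfl⟩ : i ∈ Set.range (s.orderEmbOfFin rfl) := by simpa using hi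
    exact ⟨_, k, rfl, rfl⟩

lemma ran_ofDomRan : ran (ofDomRan s t h) = t := by
  ext x
  simp only [ran, mem_filter, mem_univ, true_and, ofDomRan_eq_some_iff]
  constructor
  · rintro ⟨i, k, -, rfl⟩
    exact t.orderEmbOfFin_mem h k
  · intro hx
    obtain ⟨k, rfl⟩ : x ∈ Set.range (t.orderEmbOfFin h) := by simpa using hx
    exact ⟨_, k, rfl, rfl⟩

end ofDomRan

lemma apply_orderEmbOfFin_dom {f : Fin n → Option (Fin n)} (hf : IsOrderPres f)
    (h : #(ran f) = #(dom f)) (k : Fin #(dom f)) :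
    f ((dom f).orderEmbOfFin rfl k) = some ((ran f).orderEmbOfFin h k) := by
  have hsome (k : Fin #(dom f)) : (f ((dom f).orderEmbOfFin rfl k)).isSome := by
    simpa [dom] using (dom f).orderEmbOfFin_mem rfl k
  set F : Fin #(dom f) → Fin n := fun k => (f ((dom f).orderEmbOfFin rfl k)).get (hsome k)
  have hF : F = (ran f).orderEmbOfFin h := by
    refine orderEmbOfFin_unique h (fun k => ?_) (fun k l hkl => ?_)
    · exact mem_filter.2 ⟨mem_univ _, _, (Option.some_get _).symm⟩
    · exact hf _ _ _ _ (by simpa using hkl) (Option.some_get _).symm (Option.some_get _).symm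
  rw [← hF]
  exact (Option.some_get _).symm

lemma ofDomRan_dom_ran {f : Fin n → Option (Fin n)} (hf : IsOrderPres f)
    (h : #(ran f) = #(dom f)) : ofDomRan (dom f) (ran f) h = f := by
  funext i
  by_cases hi : i ∈ dom f
  · obtain ⟨k, rfl⟩ : i ∈ Set.range ((dom f).orderEmbOfFin rfl) := by simpa using hi
    rw [ofDomRan_orderEmbOfFin, apply_orderEmbOfFin_dom hf]
  · simp_all [ofDomRan, dom]

def equivBallotPairs (n : ℕ) :
    Bn n ≃ {p : Finset (Fin n) × Finset (Fin n) // IsBallotPair p.1 p.2} where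
  toFun f := ⟨(dom f.1, ran f.1), isBallotPair_dom_ran f.2⟩
  invFun p := ⟨ofDomRan p.1.1 p.1.2 p.2.1.symm,
    isPartialInj_ofDomRan, isOrderPres_ofDomRan, isOrderDec_ofDomRan p.2⟩
  left_inv f := Subtype.ext (ofDomRan_dom_ran f.2.2.1 _)
  right_inv _ := Subtype.ext (Prod.ext dom_ofDomRan ran_ofDomRan)

lemma isBallotSeq_iff_isBallotPair :
    IsBallotSeq (· ∈ s.image fun i : Fin n => (i : ℕ) + 1) (· ∈ t.image Fin.val) (n + 1) ↔
      IsBallotPair s t := by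
  have hsucc : Function.Injective fun i : Fin n => (i : ℕ) + 1 :=
    fun a b h => Fin.ext (Nat.add_right_cancel h)
  simp only [IsBallotSeq, IsBallotPair, Nat.count_mem_image hsucc,
    Nat.count_mem_image Fin.val_injective, add_lt_add_iff_right]
  have hall (u : Finset (Fin n)) {k : ℕ} (hk : n ≤ k) : {x ∈ u | x.val < k} = u :=
    filter_true_of_mem fun x _ => x.2.trans_le hk
  rw [hall s le_rfl, hall t n.le_succ]
  refine and_congr_right fun hst => ⟨fun h b => by simpa using h b (by omega), fun h u hu => ?_⟩
  obtain hu | rfl := Nat.lt_succ_iff_lt_or_eq.1 hu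
  · simpa [Fin.lt_def] using h ⟨u, hu⟩
  · rw [hall s le_rfl, hall t le_rfl, hst]

def ballotWord (s t : Finset (Fin n)) : List DyckStep :=
  pairWord (· ∈ s.image fun i : Fin n => (i : ℕ) + 1) (· ∈ t.image Fin.val) (n + 1)

def domOfWord (l : List DyckStep) : Finset (Fin n) := {i | l[2 * (i : ℕ) + 2]? = some D}

def ranOfWord (l : List DyckStep) : Finset (Fin n) := {x | l[2 * (x : ℕ) + 1]? = some U}

lemma domOfWord_ballotWord : domOfWord (ballotWord s t) = s := by
  ext i
  rw [domOfWord, mem_filter, show 2 * (i : ℕ) + 2 = 2 * (i + 1) by ring, ballotWord,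
    getElem?_pairWord_two_mul (by omega)]
  simp [Fin.val_inj]

lemma ranOfWord_ballotWord : ranOfWord (ballotWord s t) = t := by
  ext x
  rw [ranOfWord, mem_filter, ballotWord, getElem?_pairWord_two_mul_add_one (by omega)]
  simp [Fin.val_inj]

lemma ballotWord_domOfWord_ranOfWord (p : DyckWord) (hp : p.semilength = n + 1) :
    ballotWord (domOfWord (n := n) p.toList) (ranOfWord p.toList) = p.toList := by
  have hw := eq_pairWord (hp ▸ p.two_mul_semilength_eq_length.symm)
  have hb := IsBallotSeq.of_toList_eq hw
  refine (pairWord_congr (fun j hj => ?_) (fun j hj => ?_)).trans hw.symm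
  · rcases j with _ | j
    · simpa using hb.not_zero (by omega)
    · simp [domOfWord, Fin.exists_iff, mul_add]
      omega
  · obtain hj | rfl := Nat.lt_succ_iff_lt_or_eq.1 hj
    · simp [ranOfWord, Fin.exists_iff, hj]
    · simpa [ranOfWord, Fin.exists_iff] using hb.not_last

def ballotPairsEquivDyckWords (n : ℕ) :
    {p : Finset (Fin n) × Finset (Fin n) // IsBallotPair p.1 p.2} ≃
      {w : DyckWord // w.semilength = n + 1} where
  toFun p := ⟨.ofIsBallotSeq (isBallotSeq_iff_isBallotPair.2 p.2),
    DyckWord.semilength_ofIsBallotSeq _⟩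
  invFun w := ⟨(domOfWord w.1.toList, ranOfWord w.1.toList), isBallotSeq_iff_isBallotPair.1 <|
    IsBallotSeq.of_toList_eq (ballotWord_domOfWord_ranOfWord w.1 w.2).symm⟩
  left_inv _ := Subtype.ext (Prod.ext domOfWord_ballotWord ranOfWord_ballotWord)
  right_inv w := Subtype.ext (DyckWord.ext (ballotWord_domOfWord_ranOfWord w.1 w.2))

end Bn

/-- The order of `B_n` is the Catalan number `c_{n+1}`. -/
theorem order_Bn_eq_catalan (n : ℕ) : Nat.card (Bn n) = catalan (n + 1) := by
  rw [Nat.card_congr ((Bn.equivBallotPairs n).trans (Bn.ballotPairsEquivDyckWords n)),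
    Nat.card_eq_fintype_card, DyckWord.card_dyckWord_semilength_eq_catalan]
end

section
/- For n ≥ 2, the order b_n of B_n satisfies b_n = 2 b_{n-1} + 1 + sum_{q=0}^{n-3} b_{n-2,q}, where b_{p,q} is the number of elements f of B_n with D(f) ⊆ {n-q,...,n} and R(f) ⊆ {n-p,...,n}. -/
open Finset

/-- `B_{p,q}`: elements of `B_n` with domain in the last `q+1` elements `{n-q,…,n}`
and range in the last `p+1` elements `{n-p,…,n}` (1-indexed; `a : Fin n` represents `a+1`). -/
def Bpq (n p q : ℕ) : Set (Fin n → Option (Fin n)) :=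
  {f | f ∈ Bn n ∧ ∀ a x, f a = some x → n - q ≤ a.val + 1 ∧ n - p ≤ x.val + 1}

/-!
Sort `f ∈ B_n` by `f(n)`. The maps with `n ∉ D(f)` are exactly the elements of `B_{n-1}`.
If `f(n) = w`, deleting `n` from the domain is a bijection onto the maps with `n ∉ D` and range
below `w`, by order preservation. For `w = 1` only the empty map remains, for `w = n` all of
`B_{n-1}`, and for `w = q + 2 < n` the maps with `D ⊆ {1,…,n-1}` and `R ⊆ {1,…,q+1}`; the
reflected inverse `a ↦ n + 1 - f⁻¹(n + 1 - a)` carries these bijectively onto `B_{n-2,q}`.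
-/

lemma Nat.card_eq_sum_card_fiber {α β : Type*} [Finite α] [Fintype β] (s : Set α) (g : α → β) :
    Nat.card s = ∑ v, Nat.card {a | a ∈ s ∧ g a = v} := by
  rw [← Nat.card_congr (Equiv.sigmaFiberEquiv fun a : s => g a), Nat.card_sigma]
  exact Finset.sum_congr rfl fun v _ =>
    Nat.card_congr (Equiv.subtypeSubtypeEquivSubtypeInter (· ∈ s) (g · = v))

lemma Nat.card_eq_of_invOn {α β : Type*} {s : Set α} {t : Set β} {f : α → β} {g : β → α}
    (h : Set.InvOn g f s t) (hf : Set.MapsTo f s t) (hg : Set.MapsTo g t s) :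
    Nat.card s = Nat.card t :=
  Nat.card_congr ((h.bijOn hf hg).equiv f)

namespace Bn

variable {n : ℕ}

lemma lt_of_apply_lt {f : Fin n → Option (Fin n)} (hf : f ∈ Bn n)
    {a b x y : Fin n} (ha : f a = some x) (hb : f b = some y) (hxy : x < y) : a < b := by
  rcases lt_trichotomy a b with h | rfl | h
  · exact h
  · cases (Option.some.inj (ha.symm.trans hb) ▸ hxy).false
  · exact absurd (hf.2.1 b a y x h hb ha) hxy.asymm

lemma mem_of_submap {f g : Fin n → Option (Fin n)} (hf : f ∈ Bn n)
    (hgf : ∀ a x, g a = some x → f a = some x) : g ∈ Bn n :=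
  ⟨fun a b x ha hb => hf.1 a b x (hgf _ _ ha) (hgf _ _ hb),
   fun a b x y hab ha hb => hf.2.1 a b x y hab (hgf _ _ ha) (hgf _ _ hb),
   fun a x ha => hf.2.2 a x (hgf _ _ ha)⟩

lemma update_none_mem {f : Fin n → Option (Fin n)} (hf : f ∈ Bn n) (a : Fin n) :
    Function.update f a none ∈ Bn n :=
  mem_of_submap hf fun b x hb => by
    rcases eq_or_ne b a with rfl | h
    · simp at hb
    · rwa [Function.update_of_ne h] at hb

/-- The reflected inverse `a ↦ (f⁻¹ a.rev).rev`: conjugating by the order-reversing `Fin.rev`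
makes the inverse order decreasing again. -/
noncomputable def dual (f : Fin n → Option (Fin n)) : Fin n → Option (Fin n) :=
  fun a => if h : ∃ u, f u = some a.rev then some (Classical.choose h).rev else none

lemma dual_eq_some {f : Fin n → Option (Fin n)} (hf : IsPartialInj f) {a x : Fin n} :
    dual f a = some x ↔ f x.rev = some a.rev := by
  unfold dual
  constructor
  · intro h
    split_ifs at h with hex
    rw [← Option.some.inj h, Fin.rev_rev]
    exact Classical.choose_spec hex
  · intro h
    have hex : ∃ u, f u = some a.rev := ⟨x.rev, h⟩
    rw [dif_pos hex, hf _ _ _ (Classical.choose_spec hex) h, Fin.rev_rev]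

lemma dual_mem {f : Fin n → Option (Fin n)} (hf : f ∈ Bn n) : dual f ∈ Bn n := by
  refine ⟨fun a b x ha hb => ?_, fun a b x y hab ha hb => ?_, fun a x ha => ?_⟩ <;>
    simp only [dual_eq_some hf.1] at *
  · exact Fin.rev_inj.mp (Option.some.inj (ha.symm.trans hb))
  · exact Fin.rev_lt_rev.mp (lt_of_apply_lt hf hb ha (Fin.rev_lt_rev.mpr hab))
  · exact Fin.rev_le_rev.mp (hf.2.2 _ _ ha)

lemma dual_dual {f : Fin n → Option (Fin n)} (hf : f ∈ Bn n) : dual (dual f) = f := by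
  funext a
  apply Option.ext
  intro x
  rw [dual_eq_some (dual_mem hf).1, dual_eq_some hf.1, Fin.rev_rev, Fin.rev_rev]

lemma natCard_Bpq_eq_natCard_le (p q : ℕ) :
    Nat.card (Bpq n p q) =
      Nat.card {f | f ∈ Bn n ∧ ∀ a x, f a = some x → a.val ≤ p ∧ x.val ≤ q} := by
  refine Nat.card_eq_of_invOn (f := dual) (g := dual) ⟨fun f hf => dual_dual hf.1,
    fun f hf => dual_dual hf.1⟩ (fun f hf => ⟨dual_mem hf.1, fun a x ha => ?_⟩)
    (fun f hf => ⟨dual_mem hf.1, fun a x ha => ?_⟩)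
  all_goals
    rw [dual_eq_some hf.1.1] at ha
    have := hf.2 _ _ ha
    simp only [Fin.val_rev] at this
    omega

def res (f : Fin (n+1) → Option (Fin (n+1))) : Fin n → Option (Fin n) :=
  fun i => (f i.castSucc).bind (Fin.lastCases none some)

def extendNone (g : Fin n → Option (Fin n)) : Fin (n+1) → Option (Fin (n+1)) :=
  Fin.lastCases none fun i => (g i).map Fin.castSucc

@[simp] lemma extendNone_last (g : Fin n → Option (Fin n)) : extendNone g (Fin.last n) = none :=
  Fin.lastCases_last

@[simp] lemma extendNone_castSucc (g : Fin n → Option (Fin n)) (i : Fin n) :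
    extendNone g i.castSucc = (g i).map Fin.castSucc :=
  Fin.lastCases_castSucc i

lemma res_eq_some {f : Fin (n+1) → Option (Fin (n+1))} {i x : Fin n} :
    res f i = some x ↔ f i.castSucc = some x.castSucc := by
  unfold res
  cases f i.castSucc with
  | none => simp
  | some y => induction y using Fin.lastCases <;> simp [(Fin.castSucc_lt_last _).ne']

lemma res_mem {f : Fin (n+1) → Option (Fin (n+1))} (hf : f ∈ Bn (n+1)) : res f ∈ Bn n := by
  refine ⟨fun a b x ha hb => ?_, fun a b x y hab ha hb => ?_, fun a x ha => ?_⟩ <;>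
    simp only [res_eq_some] at *
  · exact Fin.castSucc_injective n (hf.1 _ _ _ ha hb)
  · exact Fin.castSucc_lt_castSucc_iff.mp
      (hf.2.1 _ _ _ _ (Fin.castSucc_lt_castSucc_iff.mpr hab) ha hb)
  · exact Fin.castSucc_le_castSucc_iff.mp (hf.2.2 _ _ ha)

lemma extendNone_eq_some {g : Fin n → Option (Fin n)} {a x : Fin (n+1)} :
    extendNone g a = some x ↔ ∃ i j, g i = some j ∧ i.castSucc = a ∧ j.castSucc = x := by
  induction a using Fin.lastCases <;> simp

lemma extendNone_mem {g : Fin n → Option (Fin n)} (hg : g ∈ Bn n) : extendNone g ∈ Bn (n+1) := by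
  refine ⟨fun a b x ha hb => ?_, fun a b x y hab ha hb => ?_, fun a x ha => ?_⟩ <;>
    simp only [extendNone_eq_some] at *
  · obtain ⟨i, j, hij, rfl, rfl⟩ := ha
    obtain ⟨i', j', hij', rfl, hj⟩ := hb
    rw [Fin.castSucc_inj] at hj
    subst hj
    rw [hg.1 _ _ _ hij hij']
  · obtain ⟨i, j, hij, rfl, rfl⟩ := ha
    obtain ⟨i', j', hij', rfl, rfl⟩ := hb
    exact Fin.castSucc_lt_castSucc_iff.mpr
      (hg.2.1 _ _ _ _ (Fin.castSucc_lt_castSucc_iff.mp hab) hij hij')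
  · obtain ⟨i, j, hij, rfl, rfl⟩ := ha
    exact Fin.castSucc_le_castSucc_iff.mpr (hg.2.2 _ _ hij)

lemma res_extendNone (g : Fin n → Option (Fin n)) : res (extendNone g) = g := by
  funext i
  apply Option.ext
  intro x
  rw [res_eq_some, extendNone_castSucc, Option.map_eq_some_iff]
  simp

lemma extendNone_res {f : Fin (n+1) → Option (Fin (n+1))} (hf : f ∈ Bn (n+1))
    (hlast : f (Fin.last n) = none) : extendNone (res f) = f := by
  funext a
  induction a using Fin.lastCases with
  | last => rw [extendNone_last, hlast]
  | cast i =>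
    rw [extendNone_castSucc]
    cases hfi : f i.castSucc with
    | none => simp [res, hfi]
    | some y =>
      obtain ⟨j, rfl⟩ : ∃ j : Fin n, j.castSucc = y := Fin.exists_castSucc_eq.mpr
        (lt_of_le_of_lt (hf.2.2 _ _ hfi) (Fin.castSucc_lt_last i)).ne
      rw [res_eq_some.mpr hfi, Option.map_some]

lemma natCard_last_eq_none :
    Nat.card {f | f ∈ Bn (n+1) ∧ f (Fin.last n) = none} = Nat.card (Bn n) :=
  Nat.card_eq_of_invOn (f := res) (g := extendNone)
    ⟨fun _ hf => extendNone_res hf.1 hf.2, fun g _ => res_extendNone g⟩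
    (fun _ hf => res_mem hf.1) (fun g hg => ⟨extendNone_mem hg, extendNone_last g⟩)

lemma update_last_eq_some {f : Fin (n+1) → Option (Fin (n+1))} {w a x : Fin (n+1)} :
    Function.update f (Fin.last n) (some w) a = some x ↔
      a = Fin.last n ∧ w = x ∨ a ≠ Fin.last n ∧ f a = some x := by
  rcases eq_or_ne a (Fin.last n) with rfl | h <;> simp [*]

lemma update_last_mem {f : Fin (n+1) → Option (Fin (n+1))} (hf : f ∈ Bn (n+1)) {w : Fin (n+1)}
    (hw : ∀ a x, f a = some x → x < w) : Function.update f (Fin.last n) (some w) ∈ Bn (n+1) := by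
  refine ⟨fun a b x ha hb => ?_, fun a b x y hab ha hb => ?_, fun a x ha => ?_⟩ <;>
    simp only [update_last_eq_some] at *
  · rcases ha with ⟨rfl, rfl⟩ | ⟨-, ha⟩ <;> rcases hb with ⟨rfl, hb⟩ | ⟨-, hb⟩
    · rfl
    · exact ((hw _ _ hb).ne rfl).elim
    · exact ((hw _ _ ha).ne hb.symm).elim
    · exact hf.1 _ _ _ ha hb
  · rcases hb with ⟨rfl, rfl⟩ | ⟨-, hb⟩
    · rcases ha with ⟨rfl, -⟩ | ⟨-, ha⟩
      · exact (lt_irrefl _ hab).elim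
      · exact hw _ _ ha
    · rcases ha with ⟨rfl, -⟩ | ⟨-, ha⟩
      · exact absurd hab (Fin.le_last b).not_gt
      · exact hf.2.1 _ _ _ _ hab ha hb
  · rcases ha with ⟨rfl, rfl⟩ | ⟨-, ha⟩
    · exact Fin.le_last _
    · exact hf.2.2 _ _ ha

lemma natCard_last_eq_some (w : Fin (n+1)) :
    Nat.card {f | f ∈ Bn (n+1) ∧ f (Fin.last n) = some w} =
      Nat.card {f | f ∈ Bn (n+1) ∧ f (Fin.last n) = none ∧ ∀ a x, f a = some x → x < w} := by
  refine Nat.card_eq_of_invOn (f := (Function.update · (Fin.last n) none))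
    (g := (Function.update · (Fin.last n) (some w))) ⟨fun f hf => ?_, fun g hg => ?_⟩
    (fun f hf => ⟨update_none_mem hf.1 _, by simp, fun a x ha => ?_⟩)
    (fun g hg => ⟨update_last_mem hg.1 hg.2.2, by simp⟩)
  · simp only [Function.update_idem, ← hf.2, Function.update_eq_self]
  · simp only [Function.update_idem, ← hg.2.1, Function.update_eq_self]
  · rcases eq_or_ne a (Fin.last n) with rfl | h
    · simp at ha
    · simp only [Function.update_of_ne h] at ha
      exact hf.1.2.1 _ _ _ _ (Fin.lt_last_iff_ne_last.mpr h) ha hf.2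

lemma natCard_range_lt_zero :
    Nat.card {f | f ∈ Bn (n+1) ∧ f (Fin.last n) = none ∧ ∀ a x, f a = some x → x < 0} = 1 := by
  have hempty : {f | f ∈ Bn (n+1) ∧ f (Fin.last n) = none ∧ ∀ a x, f a = some x → x < 0} =
      {fun _ => none} := by
    ext f
    simp only [Set.mem_ofPred_eq, Set.mem_singleton_iff, Fin.not_lt_zero, imp_false]
    constructor
    · rintro ⟨-, -, h⟩
      funext a
      exact Option.eq_none_iff_forall_ne_some.mpr (h a)
    · rintro rfl
      simp [Bn, IsPartialInj, IsOrderPres, IsOrderDec]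
  rw [hempty, Nat.card_unique]

lemma lt_last_of_apply_eq_some {f : Fin (n+1) → Option (Fin (n+1))} (hf : f ∈ Bn (n+1))
    (hlast : f (Fin.last n) = none) {a x : Fin (n+1)} (ha : f a = some x) : x < Fin.last n :=
  (hf.2.2 a x ha).trans_lt (Fin.lt_last_iff_ne_last.mpr (by rintro rfl; simp [hlast] at ha))

lemma natCard_Bpq_eq_natCard_range_lt {m : ℕ} (q : Fin m) :
    Nat.card (Bpq (m+2) m q) = Nat.card {f | f ∈ Bn (m+2) ∧ f (Fin.last (m+1)) = none ∧
      ∀ a x, f a = some x → x < q.castSucc.succ} := by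
  rw [natCard_Bpq_eq_natCard_le]
  congr 2
  ext f
  simp only [Set.mem_ofPred_eq, Fin.lt_def, Fin.val_succ, Fin.val_castSucc, Order.lt_add_one_iff]
  refine and_congr_right fun _ => ⟨fun h => ⟨?_, fun a x ha => (h a x ha).2⟩, ?_⟩
  · exact Option.eq_none_iff_forall_ne_some.mpr fun x hx => by simpa using (h _ _ hx).1
  · rintro ⟨hlast, h⟩ a x ha
    refine ⟨Nat.le_of_lt_succ (Fin.val_lt_last ?_), h a x ha⟩
    rintro rfl
    simp [hlast] at ha

lemma natCard_range_lt_last :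
    Nat.card {f | f ∈ Bn (n+1) ∧ f (Fin.last n) = none ∧ ∀ a x, f a = some x → x < Fin.last n} =
      Nat.card (Bn n) := by
  rw [← natCard_last_eq_none]
  congr 2
  ext f
  exact and_congr_right fun hf =>
    and_iff_left_of_imp fun hlast _ _ => lt_last_of_apply_eq_some hf hlast

end Bn

/-- The recursion `b_n = 2 b_{n-1} + 1 + ∑_{q=0}^{n-3} b_{n-2,q}` for `n ≥ 2`. -/
theorem bn_recursion (n : ℕ) (hn : 2 ≤ n) :
    Nat.card (Bn n) =
      2 * Nat.card (Bn (n - 1)) + 1 + ∑ q ∈ Finset.range (n - 2), Nat.card (Bpq n (n - 2) q) := by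
  obtain ⟨m, rfl⟩ : ∃ m, n = m + 2 := ⟨n - 2, by omega⟩
  rw [show m + 2 - 1 = m + 1 by omega, show m + 2 - 2 = m by omega,
    ← Fin.sum_univ_eq_sum_range (fun q => Nat.card (Bpq (m+2) m q)),
    Nat.card_eq_sum_card_fiber (Bn (m+2)) (· (Fin.last (m+1))), Fintype.sum_option,
    Bn.natCard_last_eq_none]
  simp only [Bn.natCard_last_eq_some, Bn.natCard_Bpq_eq_natCard_range_lt]
  rw [Fin.sum_univ_succ, Fin.sum_univ_castSucc, Bn.natCard_range_lt_zero, Fin.succ_last,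
    Bn.natCard_range_lt_last]
  ring
end

section
/- For 1 ≤ q < p ≤ n-1, the counting numbers satisfy b_{p,q} = 1 + sum_{r=0}^{q} b_{p-1,r}, where b_{p,q} is the number of elements f of B_n with D(f) ⊆ {n-q,...,n} and R(f) ⊆ {n-p,...,n}. -/
open Finset

/-! ### Auxiliary definitions for the bijection -/

/-- Insert the pair `(a, x)` into the partial map `g`. -/
def pIns {n : ℕ} (a x : Fin n) (g : Fin n → Option (Fin n)) : Fin n → Option (Fin n) :=
  fun b => if b = a then some x else g b

/-- Delete `a` from the domain of `f`. -/
def pDel {n : ℕ} (a : Fin n) (f : Fin n → Option (Fin n)) : Fin n → Option (Fin n) :=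
  fun b => if b = a then none else f b

lemma pIns_pDel {n : ℕ} (a x : Fin n) (f : Fin n → Option (Fin n)) (h : f a = some x) :
    pIns a x (pDel a f) = f := by
  funext b
  by_cases hb : b = a <;> simp [pIns, pDel, hb]
  subst hb; exact h.symm

/-- Elements of `Bpq n (p-1) r` never take the value `n-p-1`. -/
lemma no_M {n p r : ℕ} (hp : 1 ≤ p) (hn : p + 1 ≤ n) {g : Fin n → Option (Fin n)}
    (hg : g ∈ Bpq n (p-1) r) (b : Fin n) :
    g b ≠ some (⟨n - p - 1, by omega⟩ : Fin n) := by
  intro h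
  have h2 := (hg.2 b _ h).2
  simp only [Fin.val_mk] at h2
  omega

/-- Elements of `Bpq n (p-1) r` are undefined at `n-2-r`. -/
lemma g_none {n p q r : ℕ} (hr : r < q) (hqp : q < p) (hn : p + 1 ≤ n)
    {g : Fin n → Option (Fin n)} (hg : g ∈ Bpq n (p-1) r) :
    g ⟨n - 2 - r, by omega⟩ = none := by
  cases h : g ⟨n - 2 - r, by omega⟩ with
  | none => rfl
  | some y =>
    have h1 := (hg.2 _ y h).1
    simp only [Fin.val_mk] at h1
    omega

lemma mem_mono {n p q : ℕ} {f : Fin n → Option (Fin n)} (hf : f ∈ Bpq n (p-1) q) :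
    f ∈ Bpq n p q := by
  refine ⟨hf.1, fun a x hax => ?_⟩
  obtain ⟨h1, h2⟩ := hf.2 a x hax
  exact ⟨h1, by omega⟩

lemma else_mem {n p q : ℕ} {r : Fin (q+1)} (h : ¬ (r : ℕ) < q)
    {g : Fin n → Option (Fin n)} (hg : g ∈ Bpq n (p-1) (r : ℕ)) : g ∈ Bpq n p q := by
  have hrq : (r : ℕ) = q := by have := r.isLt; omega
  rw [hrq] at hg
  exact mem_mono hg

lemma mem_shrink {n p q : ℕ} (hn : p + 1 ≤ n) {f : Fin n → Option (Fin n)}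
    (hf : f ∈ Bpq n p q) (hM : ∀ a, f a ≠ some (⟨n - p - 1, by omega⟩ : Fin n)) :
    f ∈ Bpq n (p-1) q := by
  refine ⟨hf.1, fun a x hax => ?_⟩
  obtain ⟨h1, h2⟩ := hf.2 a x hax
  have h3 : x.val ≠ n - p - 1 := by
    intro hx
    exact hM a (by rw [hax]; congr 1; exact Fin.ext hx)
  exact ⟨h1, by omega⟩

lemma f0_mem {n p q : ℕ} (hn : p + 1 ≤ n) :
    pIns (⟨n - 1, by omega⟩ : Fin n) (⟨n - p - 1, by omega⟩ : Fin n) (fun _ => none)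
      ∈ Bpq n p q := by
  refine ⟨⟨?_, ?_, ?_⟩, ?_⟩
  · intro a b x ha hb
    simp only [pIns] at ha hb
    split at ha
    · split at hb
      · rename_i h1 h2; rw [h1, h2]
      · exact absurd hb (by simp)
    · exact absurd ha (by simp)
  · intro a b x y hab ha hb
    simp only [pIns] at ha hb
    split at ha
    · split at hb
      · exfalso; rename_i h1 h2; rw [h1, h2] at hab; exact lt_irrefl _ hab
      · exact absurd hb (by simp)
    · exact absurd ha (by simp)
  · intro a x ha
    simp only [pIns] at ha
    split at ha
    · rename_i h; subst h
      rw [Option.some_inj] at ha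
      subst ha
      exact Fin.mk_le_mk.mpr (by omega)
    · exact absurd ha (by simp)
  · intro a x ha
    simp only [pIns] at ha
    split at ha
    · rename_i h; subst h
      rw [Option.some_inj] at ha
      subst ha
      simp only [Fin.val_mk]
      omega
    · exact absurd ha (by simp)

lemma pIns_mem {n p q r : ℕ} (hr : r < q) (hqp : q < p) (hn : p + 1 ≤ n)
    {g : Fin n → Option (Fin n)} (hg : g ∈ Bpq n (p-1) r) :
    pIns (⟨n - 2 - r, by omega⟩ : Fin n) (⟨n - p - 1, by omega⟩ : Fin n) g
      ∈ Bpq n p q := by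
  obtain ⟨⟨ginj, gpres, gdec⟩, gdr⟩ := hg
  have hdom : ∀ b y, g b = some y → n - 2 - r < b.val ∧ n - p - 1 < y.val := by
    intro b y hby
    have := gdr b y hby
    omega
  refine ⟨⟨?_, ?_, ?_⟩, ?_⟩
  · intro b c z hb hc
    simp only [pIns] at hb hc
    split at hb
    · split at hc
      · rename_i h1 h2; rw [h1, h2]
      · exfalso
        rw [Option.some_inj] at hb
        subst hb
        exact absurd (hdom _ _ hc).2 (by simp)
    · split at hc
      · exfalso
        rw [Option.some_inj] at hc
        subst hc
        exact absurd (hdom _ _ hb).2 (by simp)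
      · exact ginj b c z hb hc
  · intro b c z y hbc hb hc
    simp only [pIns] at hb hc
    split at hb
    · split at hc
      · exfalso; rename_i h1 h2; rw [h1, h2] at hbc; exact lt_irrefl _ hbc
      · rw [Option.some_inj] at hb
        subst hb
        have := (hdom _ _ hc).2
        show (⟨n - p - 1, by omega⟩ : Fin n).val < y.val
        simp only [Fin.val_mk]
        exact this
    · split at hc
      · exfalso
        rename_i h1 h2
        subst h2
        have h3 := (hdom _ _ hb).1
        have h4 : b.val < n - 2 - r := hbc
        omega
      · exact gpres b c z y hbc hb hc
  · intro b z hb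
    simp only [pIns] at hb
    split at hb
    · rename_i h; subst h
      rw [Option.some_inj] at hb
      subst hb
      exact Fin.mk_le_mk.mpr (by omega)
    · exact gdec b z hb
  · intro b z hb
    simp only [pIns] at hb
    split at hb
    · rename_i h; subst h
      rw [Option.some_inj] at hb
      subst hb
      simp only [Fin.val_mk]
      omega
    · have := gdr b z hb
      omega

lemma pDel_mem {n p q r : ℕ} (hr : r < q) (hqp : q < p) (hn : p + 1 ≤ n)
    {f : Fin n → Option (Fin n)} (hf : f ∈ Bpq n p q)
    (ha : f ⟨n - 2 - r, by omega⟩ = some (⟨n - p - 1, by omega⟩ : Fin n)) :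
    pDel (⟨n - 2 - r, by omega⟩ : Fin n) f ∈ Bpq n (p-1) r := by
  obtain ⟨⟨finj, fpres, fdec⟩, fdr⟩ := hf
  -- every other domain point of f is above n-2-r, with value above n-p-1
  have key : ∀ b y, b ≠ (⟨n - 2 - r, by omega⟩ : Fin n) → f b = some y →
      n - 2 - r < b.val ∧ n - p - 1 < y.val := by
    intro b y hba hby
    have hrange := (fdr b y hby).2
    rcases lt_or_gt_of_ne hba with h | h
    · exfalso
      have h1 : y.val < (⟨n - p - 1, by omega⟩ : Fin n).val :=
        fpres b _ y _ h hby ha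
      simp only [Fin.val_mk] at h1
      omega
    · have h0 : (⟨n - 2 - r, by omega⟩ : Fin n).val < b.val := h
      simp only [Fin.val_mk] at h0
      have h1 : (⟨n - p - 1, by omega⟩ : Fin n).val < y.val :=
        fpres _ b _ y h ha hby
      simp only [Fin.val_mk] at h1
      exact ⟨h0, h1⟩
  refine ⟨⟨?_, ?_, ?_⟩, ?_⟩
  · intro b c z hb hc
    simp only [pDel] at hb hc
    split at hb
    · exact absurd hb (by simp)
    · split at hc
      · exact absurd hc (by simp)
      · exact finj b c z hb hc
  · intro b c z y hbc hb hc
    simp only [pDel] at hb hc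
    split at hb
    · exact absurd hb (by simp)
    · split at hc
      · exact absurd hc (by simp)
      · exact fpres b c z y hbc hb hc
  · intro b z hb
    simp only [pDel] at hb
    split at hb
    · exact absurd hb (by simp)
    · exact fdec b z hb
  · intro b z hb
    simp only [pDel] at hb
    split at hb
    · exact absurd hb (by simp)
    · rename_i hba
      have := key b z hba hb
      omega

/-- The bijection `Option (Σ r, B_{p-1,r}) → B_{p,q}`. -/
def Phi (n p q : ℕ) (hqp : q < p) (hn : p + 1 ≤ n) :
    Option ((r : Fin (q+1)) × ↥(Bpq n (p-1) (r : ℕ))) → ↥(Bpq n p q) := fun o =>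
  match o with
  | none => ⟨pIns ⟨n - 1, by omega⟩ ⟨n - p - 1, by omega⟩ (fun _ => none), f0_mem hn⟩
  | some ⟨r, g⟩ =>
    if h : (r : ℕ) < q then
      ⟨pIns ⟨n - 2 - (r : ℕ), by omega⟩ ⟨n - p - 1, by omega⟩ g.1, pIns_mem h hqp hn g.2⟩
    else ⟨g.1, else_mem h g.2⟩

lemma Phi_inj (n p q : ℕ) (hqp : q < p) (hn : p + 1 ≤ n) :
    Function.Injective (Phi n p q hqp hn) := by
  intro o1 o2 h
  match o1, o2 with
  | none, none => rfl
  | none, some ⟨r, g⟩ =>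
    exfalso
    simp only [Phi] at h
    split at h
    · rename_i hrq
      have h' : pIns (⟨n - 1, by omega⟩ : Fin n) ⟨n - p - 1, by omega⟩ (fun _ => none)
          = pIns ⟨n - 2 - (r : ℕ), by omega⟩ ⟨n - p - 1, by omega⟩ g.1 :=
        congrArg Subtype.val h
      have hne : (⟨n - 1, by omega⟩ : Fin n) ≠ ⟨n - 2 - (r : ℕ), by omega⟩ := by
        intro hc
        simp only [Fin.mk.injEq] at hc
        omega
      have := congrFun h' ⟨n - 1, by omega⟩
      simp only [pIns, if_pos rfl, if_neg hne] at this
      exact no_M (by omega) hn g.2 _ this.symm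
    · have h' : pIns (⟨n - 1, by omega⟩ : Fin n) ⟨n - p - 1, by omega⟩ (fun _ => none)
          = g.1 := congrArg Subtype.val h
      have := congrFun h' ⟨n - 1, by omega⟩
      simp only [pIns, if_pos rfl] at this
      exact no_M (by omega) hn g.2 _ this.symm
  | some ⟨r, g⟩, none =>
    exfalso
    simp only [Phi] at h
    split at h
    · rename_i hrq
      have h' : pIns (⟨n - 2 - (r : ℕ), by omega⟩ : Fin n) ⟨n - p - 1, by omega⟩ g.1
          = pIns ⟨n - 1, by omega⟩ ⟨n - p - 1, by omega⟩ (fun _ => none) :=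
        congrArg Subtype.val h
      have hne : (⟨n - 1, by omega⟩ : Fin n) ≠ ⟨n - 2 - (r : ℕ), by omega⟩ := by
        intro hc
        simp only [Fin.mk.injEq] at hc
        omega
      have := congrFun h' ⟨n - 1, by omega⟩
      simp only [pIns, if_pos rfl, if_neg hne] at this
      exact no_M (by omega) hn g.2 _ this
    · have h' : g.1 = pIns (⟨n - 1, by omega⟩ : Fin n) ⟨n - p - 1, by omega⟩
          (fun _ => none) := congrArg Subtype.val h
      have := congrFun h' ⟨n - 1, by omega⟩
      simp only [pIns, if_pos rfl] at this
      exact no_M (by omega) hn g.2 _ this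
  | some ⟨r1, g1⟩, some ⟨r2, g2⟩ =>
    simp only [Phi] at h
    split at h <;> split at h
    · rename_i hr1 hr2
      have h' : pIns (⟨n - 2 - (r1 : ℕ), by omega⟩ : Fin n) ⟨n - p - 1, by omega⟩ g1.1
          = pIns ⟨n - 2 - (r2 : ℕ), by omega⟩ ⟨n - p - 1, by omega⟩ g2.1 :=
        congrArg Subtype.val h
      have hr12 : (r1 : ℕ) = (r2 : ℕ) := by
        by_contra hne
        have hne' : (⟨n - 2 - (r1 : ℕ), by omega⟩ : Fin n)
            ≠ ⟨n - 2 - (r2 : ℕ), by omega⟩ := by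
          intro hc
          simp only [Fin.mk.injEq] at hc
          omega
        have := congrFun h' ⟨n - 2 - (r1 : ℕ), by omega⟩
        simp only [pIns, if_pos rfl, if_neg hne'] at this
        exact no_M (by omega) hn g2.2 _ this.symm
      have hr : r1 = r2 := Fin.ext hr12
      subst hr
      have hgg : g1.1 = g2.1 := by
        funext b
        by_cases hb : b = (⟨n - 2 - (r1 : ℕ), by omega⟩ : Fin n)
        · subst hb
          rw [g_none hr1 hqp hn g1.2, g_none hr1 hqp hn g2.2]
        · have := congrFun h' b
          simpa [pIns, if_neg hb] using this
      rw [Subtype.ext hgg]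
    · rename_i hr1 hr2
      exfalso
      have h' : pIns (⟨n - 2 - (r1 : ℕ), by omega⟩ : Fin n) ⟨n - p - 1, by omega⟩ g1.1
          = g2.1 := congrArg Subtype.val h
      have := congrFun h' ⟨n - 2 - (r1 : ℕ), by omega⟩
      simp only [pIns, if_pos rfl] at this
      exact no_M (by omega) hn g2.2 _ this.symm
    · rename_i hr1 hr2
      exfalso
      have h' : g1.1 = pIns (⟨n - 2 - (r2 : ℕ), by omega⟩ : Fin n) ⟨n - p - 1, by omega⟩
          g2.1 := congrArg Subtype.val h
      have := congrFun h' ⟨n - 2 - (r2 : ℕ), by omega⟩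
      simp only [pIns, if_pos rfl] at this
      exact no_M (by omega) hn g1.2 _ this
    · rename_i hr1 hr2
      have hr12 : (r1 : ℕ) = (r2 : ℕ) := by
        have := r1.isLt; have := r2.isLt; omega
      have hr : r1 = r2 := Fin.ext hr12
      subst hr
      have hgg : g1.1 = g2.1 := congrArg (fun s : ↥(Bpq n p q) => s.1) h
      rw [Subtype.ext hgg]

lemma Phi_surj (n p q : ℕ) (hq : 1 ≤ q) (hqp : q < p) (hn : p + 1 ≤ n) :
    Function.Surjective (Phi n p q hqp hn) := by
  intro ⟨f, hf⟩
  by_cases hex : ∃ a, f a = some (⟨n - p - 1, by omega⟩ : Fin n)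
  · obtain ⟨a, ha⟩ := hex
    have hadom : n - q ≤ a.val + 1 := (hf.2 a _ ha).1
    by_cases haa : a.val = n - 1
    · -- f is the single-point map f0
      refine ⟨none, ?_⟩
      apply Subtype.ext
      show pIns (⟨n - 1, by omega⟩ : Fin n) ⟨n - p - 1, by omega⟩ (fun _ => none) = f
      funext b
      by_cases hb : b = (⟨n - 1, by omega⟩ : Fin n)
      · subst hb
        have haeq : a = (⟨n - 1, by omega⟩ : Fin n) := Fin.ext haa
        rw [← haeq]
        simp [pIns, ha]
      · simp only [pIns, if_neg hb]
        cases hfb : f b with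
        | none => rfl
        | some y =>
          exfalso
          have hba : b < a := by
            have hb' : b.val ≠ n - 1 := fun hc => hb (Fin.ext hc)
            have hbn := b.isLt
            show b.val < a.val
            omega
          have hlt : y.val < (⟨n - p - 1, by omega⟩ : Fin n).val :=
            hf.1.2.1 b a y _ hba hfb ha
          simp only [Fin.val_mk] at hlt
          have hy := (hf.2 b y hfb).2
          omega
    · -- f comes from inserting at n-2-r
      have halt : a.val < n - 1 := by have := a.isLt; omega
      have hrq : n - 2 - a.val < q := by omega
      have haval : a = (⟨n - 2 - (n - 2 - a.val), by omega⟩ : Fin n) :=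
        Fin.ext (by simp only [Fin.val_mk]; omega)
      have ha' : f ⟨n - 2 - (n - 2 - a.val), by omega⟩
          = some (⟨n - p - 1, by omega⟩ : Fin n) := by rw [← haval]; exact ha
      refine ⟨some ⟨⟨n - 2 - a.val, by omega⟩,
        ⟨pDel (⟨n - 2 - (n - 2 - a.val), by omega⟩ : Fin n) f,
          pDel_mem hrq hqp hn ⟨hf.1, hf.2⟩ ha'⟩⟩, ?_⟩
      apply Subtype.ext
      show (Phi n p q hqp hn _ : Fin n → Option (Fin n)) = f
      simp only [Phi]
      rw [dif_pos (show ((⟨n - 2 - a.val, by omega⟩ : Fin (q+1)) : ℕ) < q from hrq)]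
      exact pIns_pDel _ _ f ha'
  · push_neg at hex
    have hg : f ∈ Bpq n (p-1) q := mem_shrink hn hf hex
    refine ⟨some ⟨⟨q, by omega⟩, ⟨f, by simpa using hg⟩⟩, ?_⟩
    apply Subtype.ext
    simp only [Phi]
    rw [dif_neg (show ¬ ((⟨q, by omega⟩ : Fin (q+1)) : ℕ) < q by simp)]

/-- `b_{p,q} = 1 + ∑_{r=0}^{q} b_{p-1,r}` for `1 ≤ q < p ≤ n-1`. -/
theorem bpq_recursion (n p q : ℕ) (hq : 1 ≤ q) (hqp : q < p) (hp : p ≤ n - 1) :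
    Nat.card (Bpq n p q) = 1 + ∑ r ∈ Finset.range (q + 1), Nat.card (Bpq n (p - 1) r) := by
  have hn : p + 1 ≤ n := by omega
  have hcard := Nat.card_eq_of_bijective (Phi n p q hqp hn)
    ⟨Phi_inj n p q hqp hn, Phi_surj n p q hq hqp hn⟩
  rw [← hcard, Finite.card_option]
  have hsig : Nat.card ((r : Fin (q+1)) × ↥(Bpq n (p-1) (r : ℕ)))
      = ∑ r ∈ Finset.range (q + 1), Nat.card (Bpq n (p - 1) r) := by
    letI : ∀ r : Fin (q+1), Fintype ↥(Bpq n (p-1) (r : ℕ)) := fun r => Fintype.ofFinite _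
    rw [Nat.card_eq_fintype_card, Fintype.card_sigma, ← Fin.sum_univ_eq_sum_range
      (fun r => Nat.card (Bpq n (p-1) r)) (q+1)]
    exact Finset.sum_congr rfl fun r _ => (Nat.card_eq_fintype_card).symm
  rw [hsig]
  omega
end

section
/- If v = Σ_{S ∈ supp(v)} λ_S v_S is a vector in V with all λ_S nonzero, then v_S lies in the B_n-submodule generated by v, for every S in supp(v). -/
open Finset

/-- domain of the partial map. -/
def domf {n : ℕ} (f : Fin n → Option (Fin n)) : Finset (Fin n) :=
  Finset.univ.filter (fun a => (f a).isSome)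

/-- image of a finite set under the partial map. -/
def fimg {n : ℕ} (f : Fin n → Option (Fin n)) (S : Finset (Fin n)) : Finset (Fin n) :=
  S.biUnion (fun a => (f a).toFinset)

/-- the linear action of a partial map `f` on `V = ⊕_{S ⊆ n} F·v_S`:
`f · v_S = v_{f(S)}` if `S ⊆ D(f)`, and `0` otherwise. -/
noncomputable def actMap (F : Type*) [Field F] {n : ℕ} (f : Fin n → Option (Fin n)) :
    (Finset (Fin n) →₀ F) →ₗ[F] (Finset (Fin n) →₀ F) :=
  Finsupp.lsum F (fun S => if S ⊆ domf f then Finsupp.lsingle (fimg f S) else 0)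

/-- a subspace `W` of `V` is a `B_n`-submodule if it is invariant under the action. -/
def IsBnSub {n : ℕ} {F : Type*} [Field F] (W : Submodule F (Finset (Fin n) →₀ F)) : Prop :=
  ∀ f ∈ Bn n, ∀ v ∈ W, actMap F f v ∈ W

/-- the `B_n`-submodule of `V` generated by a vector `v`. -/
noncomputable def genMod (F : Type*) [Field F] {n : ℕ} (v : Finset (Fin n) →₀ F) :
    Submodule F (Finset (Fin n) →₀ F) :=
  sInf {W | IsBnSub W ∧ v ∈ W}

/-!
Let `e_A ∈ B_n` be the identity map restricted to `A`. Then `e_A · v = Σ_{T ⊆ A} λ_T v_T`, so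
`λ_S v_S = e_S · v - Σ_{T ⊊ S} λ_T v_T`, and by strong induction on `S` every `λ_T v_T` lies in
the submodule generated by `v`.
-/

def resMap {n : ℕ} (A : Finset (Fin n)) : Fin n → Option (Fin n) :=
  fun a => if a ∈ A then some a else none

lemma resMap_mem_Bn {n : ℕ} (A : Finset (Fin n)) : resMap A ∈ Bn n := by
  refine ⟨fun a b x ha hb => ?_, fun a b x y hab ha hb => ?_, fun a x ha => ?_⟩ <;>
    simp only [resMap] at * <;> split_ifs at * <;> simp_all

lemma domf_resMap {n : ℕ} (A : Finset (Fin n)) : domf (resMap A) = A := by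
  ext a
  by_cases h : a ∈ A <;> simp [domf, resMap, h]

lemma fimg_resMap_of_subset {n : ℕ} {A T : Finset (Fin n)} (hT : T ⊆ A) :
    fimg (resMap A) T = T := by
  ext x
  simp only [fimg, resMap, mem_biUnion]
  constructor
  · rintro ⟨a, ha, hx⟩
    simp_all
  · exact fun hx => ⟨x, hx, by simp [hT hx]⟩

lemma actMap_resMap (F : Type*) [Field F] {n : ℕ} (A : Finset (Fin n))
    (v : Finset (Fin n) →₀ F) :
    actMap F (resMap A) v = v.filter (· ⊆ A) := by
  rw [actMap, Finsupp.lsum_apply, Finsupp.filter_eq_sum, Finsupp.sum, Finset.sum_filter,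
    domf_resMap]
  refine Finset.sum_congr rfl fun T _ => ?_
  split_ifs with h
  · simp [fimg_resMap_of_subset h]
  · rfl

section genMod

variable {F : Type*} [Field F] {n : ℕ}

lemma self_mem_genMod (v : Finset (Fin n) →₀ F) : v ∈ genMod F v :=
  Submodule.mem_sInf.2 fun _ hW => hW.2

lemma isBnSub_genMod (v : Finset (Fin n) →₀ F) : IsBnSub (genMod F v) :=
  fun f hf _ hu => Submodule.mem_sInf.2 fun W hW => hW.1 f hf _ (Submodule.mem_sInf.1 hu W hW)

lemma filter_subset_mem_genMod (v : Finset (Fin n) →₀ F) (A : Finset (Fin n)) :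
    v.filter (· ⊆ A) ∈ genMod F v :=
  actMap_resMap F A v ▸ isBnSub_genMod v _ (resMap_mem_Bn A) v (self_mem_genMod v)

lemma filter_subset_eq_single_add_filter_ssubset (v : Finset (Fin n) →₀ F) (S : Finset (Fin n)) :
    v.filter (· ⊆ S) = Finsupp.single S (v S) + v.filter (· ⊂ S) := by
  ext T
  rcases eq_or_ne T S with rfl | hT
  · simp
  · simp [Finsupp.filter_apply, ssubset_iff_subset_ne, hT]

lemma single_apply_mem_genMod (v : Finset (Fin n) →₀ F) (S : Finset (Fin n)) :
    Finsupp.single S (v S) ∈ genMod F v := by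
  induction S using Finset.strongInduction with
  | H S ih =>
    have hlower : v.filter (· ⊂ S) ∈ genMod F v := by
      rw [Finsupp.filter_eq_sum]
      exact Submodule.sum_mem _ fun T hT => ih T (Finset.mem_filter.1 hT).2
    have hsum := filter_subset_mem_genMod v S
    rw [filter_subset_eq_single_add_filter_ssubset] at hsum
    exact (Submodule.add_mem_iff_left _ hlower).1 hsum

end genMod

theorem single_mem_genMod_general (n : ℕ) (F : Type*) [Field F]
    (v : Finset (Fin n) →₀ F) (S : Finset (Fin n)) (hS : S ∈ v.support) :
    Finsupp.single S (1 : F) ∈ genMod F v := by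
  have hvS : v S ≠ 0 := Finsupp.mem_support_iff.1 hS
  have hsingle : Finsupp.single S (1 : F) = (v S)⁻¹ • Finsupp.single S (v S) := by
    rw [Finsupp.smul_single', inv_mul_cancel₀ hvS]
  rw [hsingle]
  exact Submodule.smul_mem _ _ (single_apply_mem_genMod v S)

/-- if `S` is in the support of `v`, then `v_S ∈ B_n v`. -/
theorem single_mem_genMod (n : ℕ) (F : Type*) [Field F] [CharZero F]
    (v : Finset (Fin n) →₀ F) (S : Finset (Fin n)) (hS : S ∈ v.support) :
    Finsupp.single S (1 : F) ∈ genMod F v :=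
  single_mem_genMod_general n F v S hS
end

section
/- Every B_n-submodule of V is cyclic, i.e., generated by a single vector. -/
open Finset

section Aux

/-- the partial identity on `S`. -/
def eS {n : ℕ} (S : Finset (Fin n)) : Fin n → Option (Fin n) :=
  fun a => if a ∈ S then some a else none

lemma eS_mem {n : ℕ} (S : Finset (Fin n)) : eS S ∈ Bn n := by
  refine ⟨fun a b x ha hb => ?_, fun a b x y hab ha hb => ?_, fun a x ha => ?_⟩
  · simp only [eS] at ha hb; split_ifs at ha hb; simp_all
  · simp only [eS] at ha hb; split_ifs at ha hb; simp_all
  · simp only [eS] at ha; split_ifs at ha; simp_all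

lemma domf_eS {n : ℕ} (S : Finset (Fin n)) : domf (eS S) = S := by
  ext a; by_cases h : a ∈ S <;> simp [domf, eS, h]

lemma fimg_eS {n : ℕ} {S T : Finset (Fin n)} (h : T ⊆ S) : fimg (eS S) T = T := by
  ext a
  simp only [fimg, Finset.mem_biUnion, Option.mem_toFinset]
  constructor
  · rintro ⟨b, hb, hba⟩
    simp only [eS, if_pos (h hb), Option.mem_def, Option.some.injEq] at hba
    subst hba; exact hb
  · intro ha; exact ⟨a, ha, by simp [eS, h ha]⟩

lemma act_eS_apply {n : ℕ} (F : Type*) [Field F] (S : Finset (Fin n))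
    (w : Finset (Fin n) →₀ F) (U : Finset (Fin n)) :
    actMap F (eS S) w U = if U ⊆ S then w U else 0 := by
  classical
  rw [actMap, Finsupp.lsum_apply, Finsupp.sum_apply, Finsupp.sum]
  have key : ∀ T ∈ w.support,
      ((if T ⊆ domf (eS S) then Finsupp.lsingle (R := F) (M := F) (fimg (eS S) T) else 0) (w T)) U
        = if T = U then (if U ⊆ S then w U else 0) else 0 := by
    intro T hT
    rw [domf_eS]
    by_cases hTS : T ⊆ S
    · rw [if_pos hTS, fimg_eS hTS]
      by_cases hTU : T = U
      · subst hTU; simp [hTS, Finsupp.single_apply]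
      · simp [hTU, Finsupp.single_apply]
    · rw [if_neg hTS]
      by_cases hTU : T = U
      · subst hTU; simp [hTS]
      · simp [hTU]
  rw [Finset.sum_congr rfl key, Finset.sum_ite_eq' w.support U]
  by_cases hU : U ∈ w.support
  · rw [if_pos hU]
  · rw [if_neg hU]
    rw [Finsupp.notMem_support_iff] at hU
    simp [hU]

lemma single_mem_of_isBnSub {n : ℕ} {F : Type*} [Field F]
    {W : Submodule F (Finset (Fin n) →₀ F)} (hW : IsBnSub W)
    {w : Finset (Fin n) →₀ F} (hw : w ∈ W) (S : Finset (Fin n)) :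
    Finsupp.single S (w S) ∈ W := by
  classical
  have key : Finsupp.single S (w S)
      = ∑ T ∈ S.powerset, ((-1 : F) ^ ((S \ T).card)) • actMap F (eS T) w := by
    ext U
    rw [Finsupp.finset_sum_apply]
    simp only [Finsupp.smul_apply, act_eS_apply, smul_eq_mul]
    by_cases hUS : U ⊆ S
    · have step : ∀ T ∈ S.powerset,
          (-1 : F) ^ ((S \ T).card) * (if U ⊆ T then w U else 0)
            = if U ⊆ T then (-1 : F) ^ ((S \ T).card) * w U else 0 := by
        intro T _; split_ifs <;> simp
      rw [Finset.sum_congr rfl step, Finset.sum_ite, Finset.sum_const_zero, add_zero]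
      have hbij : ∑ T ∈ S.powerset.filter (fun T => U ⊆ T),
            (-1 : F) ^ ((S \ T).card) * w U
          = ∑ R ∈ (S \ U).powerset, (-1 : F) ^ R.card * w U := by
        refine Finset.sum_nbij' (fun T => S \ T) (fun R => S \ R) ?_ ?_ ?_ ?_ ?_
        · intro T hT
          simp only [Finset.mem_filter, Finset.mem_powerset] at hT ⊢
          exact Finset.sdiff_subset_sdiff le_rfl hT.2
        · intro R hR
          simp only [Finset.mem_powerset] at hR
          simp only [Finset.mem_filter, Finset.mem_powerset]
          refine ⟨Finset.sdiff_subset, fun a ha => Finset.mem_sdiff.mpr ⟨hUS ha, ?_⟩⟩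
          intro haR
          have := hR haR
          exact (Finset.mem_sdiff.mp this).2 ha
        · intro T hT
          simp only [Finset.mem_filter, Finset.mem_powerset] at hT
          exact Finset.sdiff_sdiff_eq_self hT.1
        · intro R hR
          simp only [Finset.mem_powerset] at hR
          exact Finset.sdiff_sdiff_eq_self (hR.trans Finset.sdiff_subset)
        · intro T hT; rfl
      rw [hbij, ← Finset.sum_mul]
      have hpow : (∑ R ∈ (S \ U).powerset, (-1 : F) ^ R.card)
          = if S \ U = ∅ then 1 else 0 := by
        have := Finset.sum_powerset_neg_one_pow_card (x := S \ U)
        have hcast : ((∑ R ∈ (S \ U).powerset, (-1 : ℤ) ^ R.card : ℤ) : F)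
            = ∑ R ∈ (S \ U).powerset, (-1 : F) ^ R.card := by push_cast; ring_nf
        rw [← hcast, this]
        split_ifs <;> simp
      rw [hpow]
      by_cases hSU : U = S
      · subst hSU; simp [Finsupp.single_apply]
      · have : S \ U ≠ ∅ := by
          intro hcon
          exact hSU (Finset.Subset.antisymm hUS
            (by intro a ha; by_contra h
                exact (Finset.notMem_empty a) (hcon ▸ Finset.mem_sdiff.mpr ⟨ha, h⟩)))
        rw [if_neg this, zero_mul, Finsupp.single_apply, if_neg (fun h => hSU h.symm)]
    · have step : ∀ T ∈ S.powerset,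
          (-1 : F) ^ ((S \ T).card) * (if U ⊆ T then w U else 0) = 0 := by
        intro T hT
        rw [Finset.mem_powerset] at hT
        rw [if_neg (fun h => hUS (h.trans hT)), mul_zero]
      rw [Finset.sum_congr rfl step, Finset.sum_const_zero, Finsupp.single_apply,
        if_neg (fun h => hUS h.ge)]
  rw [key]
  exact Submodule.sum_mem _ (fun T _ =>
    Submodule.smul_mem _ _ (hW (eS T) (eS_mem T) w hw))

lemma single_one_mem_of_isBnSub {n : ℕ} {F : Type*} [Field F]
    {W : Submodule F (Finset (Fin n) →₀ F)} (hW : IsBnSub W)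
    {w : Finset (Fin n) →₀ F} (hw : w ∈ W) {S : Finset (Fin n)} (hS : w S ≠ 0) :
    Finsupp.single S (1 : F) ∈ W := by
  have h := single_mem_of_isBnSub hW hw S
  have : Finsupp.single S (1 : F) = (w S)⁻¹ • Finsupp.single S (w S) := by
    rw [Finsupp.smul_single, smul_eq_mul, inv_mul_cancel₀ hS]
  rw [this]
  exact Submodule.smul_mem _ _ h

end Aux

/-- every `B_n`-submodule of `V` is cyclic. -/
theorem every_submodule_cyclic (n : ℕ) (F : Type*) [Field F] [CharZero F]
    (W : Submodule F (Finset (Fin n) →₀ F)) (hW : IsBnSub W) :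
    ∃ v ∈ W, W = genMod F v := by
  classical
  set v : Finset (Fin n) →₀ F :=
    ∑ S ∈ Finset.univ.filter (fun S => Finsupp.single S (1 : F) ∈ W),
      Finsupp.single S (1 : F) with hv
  have hvW : v ∈ W :=
    Submodule.sum_mem _ (fun S hS => (Finset.mem_filter.mp hS).2)
  have hvS : ∀ S : Finset (Fin n),
      v S = if Finsupp.single S (1 : F) ∈ W then 1 else 0 := by
    intro S
    rw [hv, Finsupp.finset_sum_apply]
    simp only [Finsupp.single_apply]
    rw [Finset.sum_ite_eq' (Finset.univ.filter (fun S => Finsupp.single S (1 : F) ∈ W)) S]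
    simp
  refine ⟨v, hvW, le_antisymm ?_ (sInf_le ⟨hW, hvW⟩)⟩
  intro w hw
  rw [genMod, Submodule.mem_sInf]
  rintro W' ⟨hW', hvW'⟩
  have hw' : w = ∑ S ∈ w.support, Finsupp.single S (w S) := (Finsupp.sum_single w).symm
  rw [hw']
  refine Submodule.sum_mem _ (fun S _ => ?_)
  by_cases hwS : w S = 0
  · rw [hwS, Finsupp.single_zero]; exact Submodule.zero_mem _
  · have hSW : Finsupp.single S (1 : F) ∈ W := single_one_mem_of_isBnSub hW hw hwS
    have hvS1 : v S = 1 := by rw [hvS S, if_pos hSW]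
    have h1 : Finsupp.single S (1 : F) ∈ W' := by
      have := single_mem_of_isBnSub hW' hvW' S
      rwa [hvS1] at this
    have : Finsupp.single S (w S) = (w S) • Finsupp.single S (1 : F) := by
      rw [Finsupp.smul_single, smul_eq_mul, mul_one]
    rw [this]
    exact Submodule.smul_mem _ _ h1
end
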